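/- arXiv:1909.06545 — 4 statements merged into one kernel-verified Lean document; each statement's English description precedes it below -/
import Mathlib

section
/- If Γ₁ and Γ₂ are (2,2)-tight subgraphs of a (2,2)-sparse multigraph Γ and Γ₁ ∩ Γ₂ is nonempty, then both Γ₁ ∪ Γ₂ and Γ₁ ∩ Γ₂ are (2,2)-tight. -/
/-- A finite multigraph: each edge is incident to an unordered pair of vertices
(loops and parallel edges allowed). -/
structure MGraph (V E : Type) where
  inc : E → Sym2 V

namespace MGraph

variable {V E : Type} [DecidableEq V] [DecidableEq E]

/-- A subgraph of a multigraph: a set of vertices and a set of edges whose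
endpoints all lie in the vertex set. -/
structure Sub (G : MGraph V E) where
  verts : Finset V
  edges : Finset E
  compat : ∀ e ∈ edges, ∀ v ∈ G.inc e, v ∈ verts

variable {G : MGraph V E}

/-- γ(H) = 2|V(H)| - |E(H)|. -/
def Sub.gamma (H : G.Sub) : ℤ := 2 * H.verts.card - H.edges.card

def Sub.union (H K : G.Sub) : G.Sub where
  verts := H.verts ∪ K.verts
  edges := H.edges ∪ K.edges
  compat := by
    intro e he v hv
    rcases Finset.mem_union.1 he with h | h
    · exact Finset.mem_union.2 (Or.inl (H.compat e h v hv))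
    · exact Finset.mem_union.2 (Or.inr (K.compat e h v hv))

def Sub.inter (H K : G.Sub) : G.Sub where
  verts := H.verts ∩ K.verts
  edges := H.edges ∩ K.edges
  compat := by
    intro e he v hv
    rcases Finset.mem_inter.1 he with ⟨h1, h2⟩
    exact Finset.mem_inter.2 ⟨H.compat e h1 v hv, K.compat e h2 v hv⟩

/-- Subgraph containment. -/
def Sub.le (H K : G.Sub) : Prop := H.verts ⊆ K.verts ∧ H.edges ⊆ K.edges

/-- H is (2,l)-sparse: every nonempty subgraph K of H has γ(K) ≥ l. -/
def Sparse (l : ℤ) (H : G.Sub) : Prop :=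
  ∀ K : G.Sub, K.le H → K.verts.Nonempty → l ≤ K.gamma

/-- H is (2,l)-tight: (2,l)-sparse and γ(H) = l. -/
def Tight (l : ℤ) (H : G.Sub) : Prop := Sparse l H ∧ H.gamma = l

/-- The whole graph, as a subgraph of itself. -/
def top (G : MGraph V E) [Fintype V] [Fintype E] : G.Sub where
  verts := Finset.univ
  edges := Finset.univ
  compat := fun _ _ v _ => Finset.mem_univ v

/-- Adjacency within a subgraph. -/
def Sub.Adj (H : G.Sub) (u w : V) : Prop := ∃ e ∈ H.edges, G.inc e = s(u, w)

/-- A subgraph is connected if any two of its vertices are joined by a walk in it. -/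
def Sub.Connected (H : G.Sub) : Prop :=
  ∀ u ∈ H.verts, ∀ w ∈ H.verts, Relation.ReflTransGen H.Adj u w

/-- The graph obtained from `G` by identifying the vertex `b` with the vertex `a`
and deleting the two edges `f` and `g`. -/
def contractDel (G : MGraph V E) (a b : V) (hab : a ≠ b) (f g : E) :
    MGraph {v : V // v ≠ b} {e : E // e ≠ f ∧ e ≠ g} where
  inc e := (G.inc e.1).map fun v => if hv : v = b then ⟨a, hab⟩ else ⟨v, hv⟩

/-- Add a single new edge joining `u` and `v`. -/
def addEdge (G : MGraph V E) (u v : V) : MGraph V (Option E) where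
  inc := fun e? => e?.elim s(u, v) G.inc

end MGraph

/-!
The count γ is modular: vertices and edges are both counted by inclusion–exclusion, so
γ(Γ₁ ∪ Γ₂) + γ(Γ₁ ∩ Γ₂) = γ(Γ₁) + γ(Γ₂) = 4. Union and intersection are nonempty subgraphs
of the sparse graph Γ, so each term is at least 2, hence each equals 2; and sparsity passes
from Γ to all of its subgraphs.
-/

namespace MGraph

variable {V E : Type} {G : MGraph V E}

theorem Sub.le_refl (H : G.Sub) : H.le H :=
  ⟨Finset.Subset.refl _, Finset.Subset.refl _⟩

theorem Sub.le_trans {H K L : G.Sub} (hHK : H.le K) (hKL : K.le L) : H.le L :=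
  ⟨hHK.1.trans hKL.1, hHK.2.trans hKL.2⟩

theorem Sub.le_top [Fintype V] [Fintype E] (H : G.Sub) : H.le (top G) :=
  ⟨Finset.subset_univ _, Finset.subset_univ _⟩

theorem Sparse.anti {l : ℤ} {H K : G.Sub} (hH : Sparse l H) (hKH : K.le H) : Sparse l K :=
  fun L hLK hL => hH L (Sub.le_trans hLK hKH) hL

theorem Sparse.le_gamma {l : ℤ} {H : G.Sub} (hH : Sparse l H) (hne : H.verts.Nonempty) :
    l ≤ H.gamma :=
  hH H H.le_refl hne

theorem Sub.gamma_union_add_gamma_inter [DecidableEq V] [DecidableEq E] (H K : G.Sub) :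
    (H.union K).gamma + (H.inter K).gamma = H.gamma + K.gamma := by
  have hv := Finset.card_union_add_card_inter H.verts K.verts
  have he := Finset.card_union_add_card_inter H.edges K.edges
  simp only [Sub.gamma, Sub.union, Sub.inter]
  omega

end MGraph

/-- if Γ₁, Γ₂ are (2,2)-tight subgraphs of a (2,2)-sparse multigraph Γ
and Γ₁ ∩ Γ₂ is nonempty, then Γ₁ ∪ Γ₂ and Γ₁ ∩ Γ₂ are (2,2)-tight. -/
theorem tight_union_and_tight_inter {V E : Type} [DecidableEq V] [DecidableEq E]
    [Fintype V] [Fintype E] (G : MGraph V E)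
    (hsp : MGraph.Sparse 2 (MGraph.top G))
    (Γ₁ Γ₂ : G.Sub)
    (h1 : MGraph.Tight 2 Γ₁) (h2 : MGraph.Tight 2 Γ₂)
    (hne : (Γ₁.inter Γ₂).verts.Nonempty) :
    MGraph.Tight 2 (Γ₁.union Γ₂) ∧ MGraph.Tight 2 (Γ₁.inter Γ₂) := by
  have hsub : ∀ H : G.Sub, MGraph.Sparse 2 H := fun H => hsp.anti H.le_top
  have hune : (Γ₁.union Γ₂).verts.Nonempty := hne.mono Finset.inter_subset_union
  have hu := (hsub _).le_gamma hune
  have hi := (hsub _).le_gamma hne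
  have hmod := Γ₁.gamma_union_add_gamma_inter Γ₂
  refine ⟨⟨hsub _, ?_⟩, ⟨hsub _, ?_⟩⟩ <;> linarith [h1.2, h2.2]
end

section
/- Let l ≤ 2 and let G be a (2,l)-tight graph embedded in a surface Σ. If H is a subgraph of G and F is a face of H, then γ(H ∪ int_G(F)) ≤ γ(H), where int_G(F) is the subgraph of G consisting of all vertices and edges lying in the closure of F. -/
/-! Adding `I = int_G(F)` to a subgraph changes γ by `γ(I) - γ(· ∩ I)`, so it changes γ(H) and
γ(X) by the same amount because `H ∩ I = X ∩ I`. For `X = ext_G(F)` the change is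
`γ(G) - γ(X) = l - γ(X) ≤ 0` by sparsity of `G`. -/

namespace MGraph

theorem Sparse.le_gamma_s5 {V E : Type} [Fintype V] [Fintype E] {G : MGraph V E} {l : ℤ}
    (hsp : Sparse l (top G)) {K : G.Sub} (hK : K.verts.Nonempty) : l ≤ K.gamma :=
  hsp K ⟨Finset.subset_univ _, Finset.subset_univ _⟩ hK

variable {V E : Type} [DecidableEq V] [DecidableEq E] {G : MGraph V E}

theorem Sub.gamma_union_add_gamma_inter_s5 (A B : G.Sub) :
    (A.union B).gamma + (A.inter B).gamma = A.gamma + B.gamma := by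
  have hv := Finset.card_union_add_card_inter A.verts B.verts
  have he := Finset.card_union_add_card_inter A.edges B.edges
  simp only [Sub.gamma, Sub.union, Sub.inter]
  omega

theorem Sub.gamma_inter_comm (A B : G.Sub) : (A.inter B).gamma = (B.inter A).gamma := by
  simp only [Sub.gamma, Sub.inter, Finset.inter_comm]

theorem Sub.gamma_union_sub_eq_of_inter_eq {H X : G.Sub} (I : G.Sub)
    (h : H.inter I = X.inter I) :
    (H.union I).gamma - H.gamma = (I.union X).gamma - X.gamma := by
  have hH := H.gamma_union_add_gamma_inter_s5 I
  have hX := I.gamma_union_add_gamma_inter_s5 X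
  rw [h, X.gamma_inter_comm] at hH
  omega

end MGraph

theorem hole_filling_general {V E : Type} [DecidableEq V] [DecidableEq E]
    [Fintype V] [Fintype E] (G : MGraph V E) (l : ℤ)
    (hsp : MGraph.Sparse l (MGraph.top G))
    (ht : (MGraph.top G).gamma = l)
    (H I X : G.Sub)
    (hcover : I.union X = MGraph.top G)
    (hHI : H.inter I = X.inter I)
    (hXne : X.verts.Nonempty) :
    (H.union I).gamma ≤ H.gamma := by
  have hchange := MGraph.Sub.gamma_union_sub_eq_of_inter_eq I hHI
  rw [hcover, ht] at hchange
  linarith [hsp.le_gamma_s5 hXne]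

/-- hole filling: `G` is a (2,l)-tight surface graph (l ≤ 2), `H` a
subgraph, `F` a face of `H` with interior subgraph `I = int_G(F)` and exterior
subgraph `X = ext_G(F)`; these satisfy `G = I ∪ X`, `H ∩ I = X ∩ I` and `X` is
nonempty.  Then γ(H ∪ int_G(F)) ≤ γ(H). -/
theorem hole_filling {V E : Type} [DecidableEq V] [DecidableEq E]
    [Fintype V] [Fintype E] (G : MGraph V E) (l : ℤ) (hl : l ≤ 2)
    (hsp : MGraph.Sparse l (MGraph.top G))
    (ht : (MGraph.top G).gamma = l)
    (H I X : G.Sub)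
    (hcover : I.union X = MGraph.top G)
    (hHI : H.inter I = X.inter I)
    (hXne : X.verts.Nonempty) :
    (H.union I).gamma ≤ H.gamma :=
  hole_filling_general G l hsp ht H I X hcover hHI hXne
end

section
/- Let G be a surface graph with a digon face D with boundary walk v₁,e₁,v₂,e₂,v₁ where v₁ ≠ v₂ and e₁ ≠ e₂, and let G_D = (G/e₁) - e₂ be the digon contraction. Then G is (2,l)-sparse if and only if G_D is (2,l)-sparse. -/
namespace MGraph

variable {V E : Type}

section Sparse

variable [Fintype V] [Fintype E]

theorem Sub.le_top_s7 {G : MGraph V E} (K : G.Sub) : K.le G.top :=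
  ⟨Finset.subset_univ _, Finset.subset_univ _⟩

theorem sparse_top_iff {G : MGraph V E} {l : ℤ} :
    Sparse l G.top ↔ ∀ K : G.Sub, K.verts.Nonempty → l ≤ K.gamma :=
  ⟨fun h K hK => h K K.le_top_s7 hK, fun h K _ hK => h K hK⟩

theorem Sparse.of_forall_exists_gamma_le {V' E' : Type} [Fintype V'] [Fintype E']
    {G : MGraph V E} {H : MGraph V' E'} {l : ℤ} (hG : Sparse l G.top)
    (h : ∀ K : H.Sub, K.verts.Nonempty → ∃ L : G.Sub, L.verts.Nonempty ∧ L.gamma ≤ K.gamma) :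
    Sparse l H.top := by
  rw [sparse_top_iff] at hG ⊢
  intro K hK
  obtain ⟨L, hL, hLK⟩ := h K hK
  exact (hG L hL).trans hLK

end Sparse

theorem Sub.mem_verts_of_inc_eq {G : MGraph V E} (K : G.Sub) {a b : V} {e : E}
    (he : e ∈ K.edges) (hi : G.inc e = s(a, b)) : a ∈ K.verts ∧ b ∈ K.verts :=
  ⟨K.compat e he a (hi ▸ Sym2.mem_mk_left a b), K.compat e he b (hi ▸ Sym2.mem_mk_right a b)⟩

section Contraction

variable [DecidableEq V] {G : MGraph V E} {a b : V} (hab : a ≠ b)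

/-- The vertex map of `G.contractDel a b hab f g`, sending `b` to `a`. -/
def contractVert (v : V) : {v : V // v ≠ b} :=
  if hv : v = b then ⟨a, hab⟩ else ⟨v, hv⟩

theorem contractVert_self : contractVert hab b = ⟨a, hab⟩ := dif_pos rfl

theorem contractVert_of_ne {v : V} (hv : v ≠ b) : contractVert hab v = ⟨v, hv⟩ := dif_neg hv

theorem mem_contractDel_inc {f g : E} {e : {e : E // e ≠ f ∧ e ≠ g}} {v : V}
    (hv : v ∈ G.inc e.1) : contractVert hab v ∈ (G.contractDel a b hab f g).inc e :=
  Sym2.mem_map.2 ⟨v, hv, rfl⟩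

variable {hab}

theorem Sub.card_image_contractVert_lt (K : G.Sub) (ha : a ∈ K.verts) (hb : b ∈ K.verts) :
    (K.verts.image (contractVert hab)).card < K.verts.card := by
  have not_injOn : ¬ Set.InjOn (contractVert hab) K.verts := fun hinj =>
    hab (hinj ha hb (by rw [contractVert_self, contractVert_of_ne hab hab]))
  exact Finset.card_image_le.lt_of_ne (mt Finset.card_image_iff.1 not_injOn)

variable {f g : E}

namespace Sub

variable (K : (G.contractDel a b hab f g).Sub)

theorem val_mem_map_verts {e} (he : e ∈ K.edges) {v : V} (hv : v ∈ G.inc e.1) (hvb : v ≠ b) :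
    v ∈ K.verts.map (Function.Embedding.subtype _) := by
  have := K.compat e he _ (mem_contractDel_inc hab hv)
  rw [contractVert_of_ne hab hvb] at this
  exact Finset.mem_map_of_mem _ this

def lift (ha : ⟨a, hab⟩ ∉ K.verts) : G.Sub where
  verts := K.verts.map (Function.Embedding.subtype _)
  edges := K.edges.map (Function.Embedding.subtype _)
  compat := by
    intro _ he v hv
    obtain ⟨e, he', rfl⟩ := Finset.mem_map.1 he
    by_cases hvb : v = b
    · have := K.compat e he' _ (mem_contractDel_inc hab hv)
      rw [hvb, contractVert_self] at this
      exact absurd this ha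
    · exact K.val_mem_map_verts he' hv hvb

theorem gamma_lift (ha : ⟨a, hab⟩ ∉ K.verts) : (K.lift ha).gamma = K.gamma := by
  simp only [gamma, lift, Finset.card_map]

variable [DecidableEq E]

def liftDigon (ha : ⟨a, hab⟩ ∈ K.verts) (hf : G.inc f = s(a, b)) (hg : G.inc g = s(a, b)) :
    G.Sub where
  verts := insert b (K.verts.map (Function.Embedding.subtype _))
  edges := insert f (insert g (K.edges.map (Function.Embedding.subtype _)))
  compat := by
    have digon_compat : ∀ v ∈ s(a, b), v ∈ insert b (K.verts.map (Function.Embedding.subtype _))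
    · rintro v hv
      rcases Sym2.mem_iff.1 hv with hva | hvb
      · rw [hva]
        exact Finset.mem_insert_of_mem (Finset.mem_map_of_mem _ ha)
      · rw [hvb]
        exact Finset.mem_insert_self _ _
    intro e he v hv
    rcases Finset.mem_insert.1 he with rfl | he
    · exact digon_compat v (hf ▸ hv)
    rcases Finset.mem_insert.1 he with rfl | he
    · exact digon_compat v (hg ▸ hv)
    obtain ⟨e, he', rfl⟩ := Finset.mem_map.1 he
    by_cases hvb : v = b
    · rw [hvb]
      exact Finset.mem_insert_self _ _
    · exact Finset.mem_insert_of_mem (K.val_mem_map_verts he' hv hvb)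

theorem gamma_liftDigon (ha : ⟨a, hab⟩ ∈ K.verts) (hf : G.inc f = s(a, b))
    (hg : G.inc g = s(a, b)) (hfg : f ≠ g) : (K.liftDigon ha hf hg).gamma = K.gamma := by
  have hb : b ∉ K.verts.map (Function.Embedding.subtype _) := by simp
  have hf' : f ∉ insert g (K.edges.map (Function.Embedding.subtype _)) := by simp [hfg]
  have hg' : g ∉ K.edges.map (Function.Embedding.subtype _) := by simp
  simp only [gamma, liftDigon, Finset.card_insert_of_notMem hb, Finset.card_insert_of_notMem hf',
    Finset.card_insert_of_notMem hg', Finset.card_map]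
  push_cast
  ring

theorem exists_lift_gamma_eq (hf : G.inc f = s(a, b)) (hg : G.inc g = s(a, b)) (hfg : f ≠ g)
    (hK : K.verts.Nonempty) : ∃ L : G.Sub, L.verts.Nonempty ∧ L.gamma = K.gamma := by
  by_cases ha : ⟨a, hab⟩ ∈ K.verts
  · exact ⟨K.liftDigon ha hf hg, Finset.insert_nonempty _ _, K.gamma_liftDigon ha hf hg hfg⟩
  · exact ⟨K.lift ha, hK.map, K.gamma_lift ha⟩

end Sub

variable [DecidableEq E] (hab f g)

def Sub.project (K : G.Sub) : (G.contractDel a b hab f g).Sub where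
  verts := K.verts.image (contractVert hab)
  edges := K.edges.subtype _
  compat := by
    rintro e he _ hw
    obtain ⟨v, hv, rfl⟩ := Sym2.mem_map.1 hw
    exact Finset.mem_image_of_mem (contractVert hab) (K.compat _ (Finset.mem_subtype.1 he) v hv)

variable {hab f g}

namespace Sub

variable (K : G.Sub)

theorem card_project_edges_of_notMem (hf : f ∉ K.edges) (hg : g ∉ K.edges) :
    (K.project hab f g).edges.card = K.edges.card := by
  rw [project, Finset.card_subtype, Finset.filter_true_of_mem]
  rintro e he
  exact ⟨by rintro rfl; exact hf he, by rintro rfl; exact hg he⟩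

theorem card_edges_le_card_project_edges_add_two :
    K.edges.card ≤ (K.project hab f g).edges.card + 2 := by
  rw [project, Finset.card_subtype,
    ← K.edges.card_filter_add_card_filter_not (fun e => e ≠ f ∧ e ≠ g)]
  gcongr
  refine (Finset.card_le_card fun e he => ?_).trans (Finset.card_le_two (a := f) (b := g))
  simp only [Finset.mem_filter, not_and_or, not_not] at he
  simpa using he.2

theorem gamma_project_le (hf : G.inc f = s(a, b)) (hg : G.inc g = s(a, b)) :
    (K.project hab f g).gamma ≤ K.gamma := by
  have hV : (K.project hab f g).verts.card ≤ K.verts.card := Finset.card_image_le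
  by_cases hfg : f ∉ K.edges ∧ g ∉ K.edges
  · have hE := K.card_project_edges_of_notMem (hab := hab) hfg.1 hfg.2
    simp only [gamma]
    omega
  · have ⟨ha, hb⟩ : a ∈ K.verts ∧ b ∈ K.verts := by
      rw [not_and_or, not_not, not_not] at hfg
      exact hfg.elim (K.mem_verts_of_inc_eq · hf) (K.mem_verts_of_inc_eq · hg)
    have hV' := K.card_image_contractVert_lt (hab := hab) ha hb
    have hE := K.card_edges_le_card_project_edges_add_two (hab := hab) (f := f) (g := g)
    simp only [gamma, project] at hE ⊢
    omega

end Sub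

end Contraction

end MGraph

theorem digon_contraction_sparse_iff_general {V E : Type} [DecidableEq V] [DecidableEq E]
    [Fintype V] [Fintype E] (G : MGraph V E) (l : ℤ)
    (v₁ v₂ : V) (e₁ e₂ : E) (hv : v₁ ≠ v₂) (he : e₁ ≠ e₂)
    (i1 : G.inc e₁ = s(v₁, v₂)) (i2 : G.inc e₂ = s(v₁, v₂)) :
    MGraph.Sparse l (MGraph.top G) ↔
      MGraph.Sparse l (MGraph.top (G.contractDel v₁ v₂ hv e₁ e₂)) :=
  ⟨fun hG => hG.of_forall_exists_gamma_le fun K hK =>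
      let ⟨L, hL, hLK⟩ := K.exists_lift_gamma_eq i1 i2 he hK
      ⟨L, hL, hLK.le⟩,
    fun hGD => hGD.of_forall_exists_gamma_le fun K hK =>
      ⟨K.project hv e₁ e₂, hK.image _, K.gamma_project_le i1 i2⟩⟩

/-- digon contraction.  If `D` is a digon of `G` with boundary walk
`v₁, e₁, v₂, e₂, v₁` (v₁ ≠ v₂, e₁ ≠ e₂), and `G_D = (G/e₁) - e₂` is the digon
contraction (identify v₂ with v₁, delete both parallel edges e₁, e₂), then `G`
is (2,l)-sparse iff `G_D` is (2,l)-sparse. -/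
theorem digon_contraction_sparse_iff {V E : Type} [DecidableEq V] [DecidableEq E]
    [Fintype V] [Fintype E] (G : MGraph V E) (l : ℤ) (hl : l ≤ 2)
    (v₁ v₂ : V) (e₁ e₂ : E) (hv : v₁ ≠ v₂) (he : e₁ ≠ e₂)
    (i1 : G.inc e₁ = s(v₁, v₂)) (i2 : G.inc e₂ = s(v₁, v₂)) :
    MGraph.Sparse l (MGraph.top G) ↔
      MGraph.Sparse l (MGraph.top (G.contractDel v₁ v₂ hv e₁ e₂)) :=
  digon_contraction_sparse_iff_general G l v₁ v₂ e₁ e₂ hv he i1 i2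
end

section
/- Suppose G is a (2,l)-sparse multigraph with a quadrilateral face Q with boundary walk v₁,e₁,v₂,e₂,v₃,e₃,v₄,e₄,v₁, where v₁ ≠ v₃ and e₁ ≠ e₃, and the quadrilateral contraction G_{Q,v₁,v₃} (identify v₁ with v₃, delete e₁ and e₃) is not (2,l)-sparse. Then either (1) there is a subgraph H of G with v₁, v₃ ∈ H, exactly one of v₂, v₄ in H, and γ(H) = l; or (2) there is a subgraph K of G with v₁, v₃ ∈ K, v₂, v₄ ∉ K, and γ(K) = l + 1. -/
namespace MGraph

variable {V E : Type} {G : MGraph V E} {l : ℤ}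

namespace Sub

section EdgeOps

variable [DecidableEq E]

def insertEdge (H : G.Sub) (e : E) {u w : V} (hinc : G.inc e = s(u, w))
    (hu : u ∈ H.verts) (hw : w ∈ H.verts) : G.Sub where
  verts := H.verts
  edges := insert e H.edges
  compat := by
    intro e' he' v hv
    rcases Finset.mem_insert.1 he' with rfl | he'
    · rw [hinc, Sym2.mem_iff] at hv
      rcases hv with rfl | rfl <;> assumption
    · exact H.compat e' he' v hv

theorem gamma_insertEdge {H : G.Sub} {e : E} {u w : V} (hinc : G.inc e = s(u, w))
    (hu : u ∈ H.verts) (hw : w ∈ H.verts) (he : e ∉ H.edges) :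
    (H.insertEdge e hinc hu hw).gamma = H.gamma - 1 := by
  simp only [gamma, insertEdge, Finset.card_insert_of_notMem he]
  push_cast
  ring

def eraseEdge (H : G.Sub) (e : E) : G.Sub where
  verts := H.verts
  edges := H.edges.erase e
  compat e' he' := H.compat e' (Finset.mem_of_mem_erase he')

theorem gamma_eraseEdge {H : G.Sub} {e : E} (he : e ∈ H.edges) :
    (H.eraseEdge e).gamma = H.gamma + 1 := by
  simp only [gamma, eraseEdge, Finset.card_erase_of_mem he]
  have := Finset.card_pos.2 ⟨e, he⟩
  push_cast [Nat.cast_sub this]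
  ring

end EdgeOps

theorem edges_nonempty_of_gamma_lt_four [DecidableEq V] {H : G.Sub} {a b : V} (hab : a ≠ b)
    (ha : a ∈ H.verts) (hb : b ∈ H.verts) (hγ : H.gamma < 4) : H.edges.Nonempty := by
  by_contra hE
  have hcard : 2 ≤ H.verts.card := by
    simpa [Finset.card_pair hab] using
      Finset.card_le_card (Finset.insert_subset ha (Finset.singleton_subset_iff.2 hb))
  simp only [gamma, Finset.not_nonempty_iff_eq_empty.1 hE, Finset.card_empty] at hγ
  omega

end Sub

namespace Sparse

variable [Fintype V] [Fintype E]

theorem le_gamma_s10 (hsp : Sparse l G.top) {H : G.Sub} (hH : H.verts.Nonempty) : l ≤ H.gamma :=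
  hsp H ⟨Finset.subset_univ _, Finset.subset_univ _⟩ hH

variable [DecidableEq E]

theorem add_two_le_gamma (hsp : Sparse l G.top) {H : G.Sub} (hH : H.verts.Nonempty)
    {e f : E} (hef : e ≠ f) (he : e ∉ H.edges) (hf : f ∉ H.edges)
    {u₁ w₁ u₂ w₂ : V} (hinc₁ : G.inc e = s(u₁, w₁)) (hinc₂ : G.inc f = s(u₂, w₂))
    (hu₁ : u₁ ∈ H.verts) (hw₁ : w₁ ∈ H.verts) (hu₂ : u₂ ∈ H.verts) (hw₂ : w₂ ∈ H.verts) :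
    l + 2 ≤ H.gamma := by
  set H' := H.insertEdge e hinc₁ hu₁ hw₁
  have hf' : f ∉ H'.edges := by simp [H', Sub.insertEdge, hef.symm, hf]
  have := hsp.le_gamma_s10 (H := H'.insertEdge f hinc₂ hu₂ hw₂) hH
  rw [Sub.gamma_insertEdge (H := H') hinc₂ hu₂ hw₂ hf', Sub.gamma_insertEdge hinc₁ hu₁ hw₁ he]
    at this
  omega

theorem exists_gamma_eq_of_insertEdge (hsp : Sparse l G.top) {H : G.Sub}
    (hH : H.verts.Nonempty) (hγ : H.gamma ≤ l + 1) {e : E} (he : e ∉ H.edges) {u w : V}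
    (hinc : G.inc e = s(u, w)) (hu : u ∈ H.verts) (hw : w ∈ H.verts) :
    ∃ H' : G.Sub, H'.verts = H.verts ∧ H'.gamma = l := by
  rcases (hsp.le_gamma_s10 hH).eq_or_lt with hl | hl
  · exact ⟨H, rfl, hl.symm⟩
  · exact ⟨H.insertEdge e hinc hu hw, rfl, by rw [Sub.gamma_insertEdge _ _ _ he]; omega⟩

theorem exists_gamma_eq_add_one_of_eraseEdge (hsp : Sparse l G.top) {H : G.Sub}
    (hH : H.verts.Nonempty) (hγ : H.gamma ≤ l + 1) (hE : H.edges.Nonempty) :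
    ∃ H' : G.Sub, H'.verts = H.verts ∧ H'.gamma = l + 1 := by
  rcases (hsp.le_gamma_s10 hH).eq_or_lt with hl | hl
  · obtain ⟨e, he⟩ := hE
    exact ⟨H.eraseEdge e, rfl, by rw [Sub.gamma_eraseEdge he]; omega⟩
  · exact ⟨H, rfl, by omega⟩

end Sparse

section Contraction

variable [DecidableEq V] {a b : V} {hab : a ≠ b} {f g : E}

namespace Sub

variable (K : (G.contractDel a b hab f g).Sub)

theorem dite_mem_verts_of_mem_inc {e : {e : E // e ≠ f ∧ e ≠ g}} (he : e ∈ K.edges) {v : V}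
    (hv : v ∈ G.inc e.1) : (if h : v = b then ⟨a, hab⟩ else ⟨v, h⟩ : {v : V // v ≠ b}) ∈ K.verts :=
  K.compat e he _ (Sym2.mem_map.2 ⟨v, hv, rfl⟩)

def liftContract : G.Sub where
  verts := insert b (K.verts.map (Function.Embedding.subtype _))
  edges := K.edges.map (Function.Embedding.subtype _)
  compat := by
    simp only [Finset.mem_map, Finset.mem_insert, Function.Embedding.coe_subtype]
    rintro _ ⟨e, he, rfl⟩ v hv
    by_cases hvb : v = b
    · exact Or.inl hvb
    · exact Or.inr ⟨⟨v, hvb⟩, by simpa [hvb] using K.dite_mem_verts_of_mem_inc he hv, rfl⟩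

theorem self_mem_liftContract : b ∈ K.liftContract.verts := Finset.mem_insert_self _ _

theorem mem_liftContract {v : {v : V // v ≠ b}} (hv : v ∈ K.verts) :
    v.1 ∈ K.liftContract.verts :=
  Finset.mem_insert_of_mem (Finset.mem_map_of_mem _ hv)

theorem left_notMem_edges_liftContract : f ∉ K.liftContract.edges := by
  simp [liftContract]

theorem right_notMem_edges_liftContract : g ∉ K.liftContract.edges := by
  simp [liftContract]

theorem gamma_liftContract : K.liftContract.gamma = K.gamma + 2 := by
  have hb : b ∉ K.verts.map (Function.Embedding.subtype _) := by simp
  simp only [gamma, liftContract, Finset.card_insert_of_notMem hb, Finset.card_map]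
  push_cast
  ring

def restrictContract (ha : ⟨a, hab⟩ ∉ K.verts) : G.Sub where
  verts := K.verts.map (Function.Embedding.subtype _)
  edges := K.edges.map (Function.Embedding.subtype _)
  compat := by
    simp only [Finset.mem_map, Function.Embedding.coe_subtype]
    rintro _ ⟨e, he, rfl⟩ v hv
    have hK := K.dite_mem_verts_of_mem_inc he hv
    by_cases hvb : v = b
    · exact absurd (by simpa [hvb] using hK) ha
    · exact ⟨⟨v, hvb⟩, by simpa [hvb] using hK, rfl⟩

theorem gamma_restrictContract (ha : ⟨a, hab⟩ ∉ K.verts) :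
    (K.restrictContract ha).gamma = K.gamma := by
  simp [gamma, restrictContract]

end Sub

theorem Sparse.mem_verts_of_gamma_lt [Fintype V] [Fintype E] (hsp : Sparse l G.top)
    {K : (G.contractDel a b hab f g).Sub} (hK : K.verts.Nonempty) (hγ : K.gamma < l) :
    ⟨a, hab⟩ ∈ K.verts := by
  by_contra ha
  have := hsp.le_gamma_s10 (H := K.restrictContract ha) (Finset.map_nonempty.2 hK)
  rw [Sub.gamma_restrictContract] at this
  omega

end Contraction

end MGraph

theorem quadrilateral_contraction_blocker_general {V E : Type} [DecidableEq V] [DecidableEq E]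
    [Fintype V] [Fintype E] (G : MGraph V E) (l : ℤ) (hl : l ≤ 2)
    (v₁ v₂ v₃ v₄ : V) (e₁ e₃ : E) (hv : v₁ ≠ v₃) (he : e₁ ≠ e₃)
    (i1 : G.inc e₁ = s(v₁, v₂))
    (i3 : G.inc e₃ = s(v₃, v₄))
    (hsp : MGraph.Sparse l (MGraph.top G))
    (hns : ¬ MGraph.Sparse l (MGraph.top (G.contractDel v₁ v₃ hv e₁ e₃))) :
    (∃ H : G.Sub, v₁ ∈ H.verts ∧ v₃ ∈ H.verts ∧
      Xor' (v₂ ∈ H.verts) (v₄ ∈ H.verts) ∧ H.gamma = l) ∨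
    (∃ K : G.Sub, v₁ ∈ K.verts ∧ v₃ ∈ K.verts ∧
      v₂ ∉ K.verts ∧ v₄ ∉ K.verts ∧ K.gamma = l + 1) := by
  simp only [MGraph.Sparse, not_forall, not_le] at hns
  obtain ⟨K, -, hK, hKγ⟩ := hns
  set X := K.liftContract
  have hv₁ : v₁ ∈ X.verts := K.mem_liftContract (hsp.mem_verts_of_gamma_lt hK hKγ)
  have hv₃ : v₃ ∈ X.verts := K.self_mem_liftContract
  have he₁ : e₁ ∉ X.edges := K.left_notMem_edges_liftContract
  have he₃ : e₃ ∉ X.edges := K.right_notMem_edges_liftContract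
  have hX : X.verts.Nonempty := ⟨v₁, hv₁⟩
  have hγ : X.gamma ≤ l + 1 := by rw [K.gamma_liftContract]; omega
  by_cases h₂ : v₂ ∈ X.verts <;> by_cases h₄ : v₄ ∈ X.verts
  · have := hsp.add_two_le_gamma hX he he₁ he₃ i1 i3 hv₁ h₂ hv₃ h₄
    omega
  · obtain ⟨H, hHX, hHγ⟩ := hsp.exists_gamma_eq_of_insertEdge hX hγ he₁ i1 hv₁ h₂
    exact Or.inl ⟨H, hHX ▸ hv₁, hHX ▸ hv₃, hHX ▸ Or.inl ⟨h₂, h₄⟩, hHγ⟩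
  · obtain ⟨H, hHX, hHγ⟩ := hsp.exists_gamma_eq_of_insertEdge hX hγ he₃ i3 hv₃ h₄
    exact Or.inl ⟨H, hHX ▸ hv₁, hHX ▸ hv₃, hHX ▸ Or.inr ⟨h₄, h₂⟩, hHγ⟩
  · have hE := X.edges_nonempty_of_gamma_lt_four hv hv₁ hv₃ (by omega)
    obtain ⟨H, hHX, hHγ⟩ := hsp.exists_gamma_eq_add_one_of_eraseEdge hX hγ hE
    exact Or.inr ⟨H, hHX ▸ hv₁, hHX ▸ hv₃, hHX ▸ h₂, hHX ▸ h₄, hHγ⟩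

/-- quadrilateral blocker.  `Q` is a quadrilateral face with boundary
walk `v₁,e₁,v₂,e₂,v₃,e₃,v₄,e₄,v₁`, `v₁ ≠ v₃`, `e₁ ≠ e₃`; `G` is (2,l)-sparse, and
the quadrilateral contraction `G_{Q,v₁,v₃}` (identify v₃ with v₁, delete e₁, e₃) is
not (2,l)-sparse.  Then there is a type 1 blocker (subgraph H with v₁,v₃ ∈ H,
exactly one of v₂,v₄ in H, γ(H) = l) or a type 2 blocker (subgraph K with
v₁,v₃ ∈ K, v₂,v₄ ∉ K, γ(K) = l + 1). -/
theorem quadrilateral_contraction_blocker {V E : Type} [DecidableEq V] [DecidableEq E]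
    [Fintype V] [Fintype E] (G : MGraph V E) (l : ℤ) (hl : l ≤ 2)
    (v₁ v₂ v₃ v₄ : V) (e₁ e₂ e₃ e₄ : E) (hv : v₁ ≠ v₃) (he : e₁ ≠ e₃)
    (i1 : G.inc e₁ = s(v₁, v₂)) (i2 : G.inc e₂ = s(v₂, v₃))
    (i3 : G.inc e₃ = s(v₃, v₄)) (i4 : G.inc e₄ = s(v₄, v₁))
    (hsp : MGraph.Sparse l (MGraph.top G))
    (hns : ¬ MGraph.Sparse l (MGraph.top (G.contractDel v₁ v₃ hv e₁ e₃))) :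
    (∃ H : G.Sub, v₁ ∈ H.verts ∧ v₃ ∈ H.verts ∧
      Xor' (v₂ ∈ H.verts) (v₄ ∈ H.verts) ∧ H.gamma = l) ∨
    (∃ K : G.Sub, v₁ ∈ K.verts ∧ v₃ ∈ K.verts ∧
      v₂ ∉ K.verts ∧ v₄ ∉ K.verts ∧ K.gamma = l + 1) :=
  quadrilateral_contraction_blocker_general G l hl v₁ v₂ v₃ v₄ e₁ e₃ hv he i1 i3 hsp hns
end
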